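/- Let P ∈ ℝ^{m×p}, S binary with S^c = 𝟙 − S, λ < 0, and S ∘ P ≠ 0. Define f(β) = max{λ + 𝟙ₘᵀ(P ∘ Δ)𝟙ₚ : ‖Δ‖_F ≤ β, S^c ∘ Δ = 0}. Then f is strictly increasing and affine in β ≥ 0, and the unique β with f(β) = 0 is β* = −λ/‖S ∘ P‖_F. -/

import Mathlib

open Matrix BigOperators

noncomputable def frobNorm {m p : ℕ} (A : Matrix (Fin m) (Fin p) ℝ) : ℝ :=
  Real.sqrt (∑ i, ∑ j, (A i j) ^ 2)

def onesVec (n : ℕ) : Fin n → ℝ := fun _ => 1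

/-- 𝟙ₘᵀ A 𝟙ₚ : sum of all entries of A. -/
noncomputable def sumEntries {m p : ℕ} (A : Matrix (Fin m) (Fin p) ℝ) : ℝ :=
  onesVec m ⬝ᵥ (A *ᵥ onesVec p)

/-- S is a 0-1 (binary) matrix. -/
def IsBinary {m p : ℕ} (S : Matrix (Fin m) (Fin p) ℝ) : Prop :=
  ∀ i j, S i j = 0 ∨ S i j = 1

/-- complement Sᶜ = 𝟙_{m×p} − S of a binary matrix. -/
def compl' {m p : ℕ} (S : Matrix (Fin m) (Fin p) ℝ) : Matrix (Fin m) (Fin p) ℝ :=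
  Matrix.of fun i j => 1 - S i j

lemma sumEntries_eq {m p : ℕ} (A : Matrix (Fin m) (Fin p) ℝ) :
    sumEntries A = ∑ i, ∑ j, A i j := by
  simp [sumEntries, onesVec, dotProduct, mulVec]

lemma frobNorm_nonneg {m p : ℕ} (A : Matrix (Fin m) (Fin p) ℝ) : 0 ≤ frobNorm A :=
  Real.sqrt_nonneg _

lemma frobNorm_sq {m p : ℕ} (A : Matrix (Fin m) (Fin p) ℝ) :
    frobNorm A ^ 2 = ∑ i, ∑ j, (A i j) ^ 2 := by
  rw [frobNorm, Real.sq_sqrt]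
  positivity

lemma frobNorm_pos {m p : ℕ} (A : Matrix (Fin m) (Fin p) ℝ) (hA : A ≠ 0) :
    0 < frobNorm A := by
  rcases (frobNorm_nonneg A).lt_or_eq with h | h
  · exact h
  exfalso; apply hA
  have h2 : ∑ i, ∑ j, (A i j) ^ 2 = 0 := by
    have := frobNorm_sq A; rw [← h] at this
    simpa using this.symm
  ext i j
  have h3 := (Finset.sum_eq_zero_iff_of_nonneg
    (fun i _ => Finset.sum_nonneg fun j _ => sq_nonneg (A i j))).mp h2 i (Finset.mem_univ i)
  have h4 := (Finset.sum_eq_zero_iff_of_nonneg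
    (fun j _ => sq_nonneg (A i j))).mp h3 j (Finset.mem_univ j)
  simpa using (pow_eq_zero_iff two_ne_zero).mp h4

lemma frobNorm_smul {m p : ℕ} (a : ℝ) (ha : 0 ≤ a) (A : Matrix (Fin m) (Fin p) ℝ) :
    frobNorm (a • A) = a * frobNorm A := by
  rw [frobNorm, frobNorm]
  have : ∑ i, ∑ j, ((a • A) i j) ^ 2 = a ^ 2 * ∑ i, ∑ j, (A i j) ^ 2 := by
    simp [Finset.mul_sum, mul_pow]
  rw [this, Real.sqrt_mul (sq_nonneg a), Real.sqrt_sq ha]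

lemma double_cs {m p : ℕ} (A B : Matrix (Fin m) (Fin p) ℝ) :
    ∑ i, ∑ j, A i j * B i j ≤ frobNorm A * frobNorm B := by
  have hcs := Finset.sum_mul_sq_le_sq_mul_sq (Finset.univ : Finset (Fin m × Fin p))
    (fun x => A x.1 x.2) (fun x => B x.1 x.2)
  rw [Fintype.sum_prod_type, Fintype.sum_prod_type, Fintype.sum_prod_type] at hcs
  have hA := frobNorm_sq A
  have hB := frobNorm_sq B
  calc ∑ i, ∑ j, A i j * B i j
      ≤ |∑ i, ∑ j, A i j * B i j| := le_abs_self _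
    _ = Real.sqrt ((∑ i, ∑ j, A i j * B i j) ^ 2) := (Real.sqrt_sq_eq_abs _).symm
    _ ≤ Real.sqrt ((frobNorm A * frobNorm B) ^ 2) := by
        apply Real.sqrt_le_sqrt
        rw [mul_pow, hA, hB]; exact hcs
    _ = frobNorm A * frobNorm B := Real.sqrt_sq
        (mul_nonneg (frobNorm_nonneg A) (frobNorm_nonneg B))

/-- The level function f(β) of the linearized problem is affine and strictly increasing
in β ≥ 0, and its unique zero is β* = −λ/‖S ∘ P‖_F. -/
theorem sr_la_level_function {m p : ℕ} (P S : Matrix (Fin m) (Fin p) ℝ)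
    (hS : IsBinary S) (lam : ℝ) (hlam : lam < 0) (hSP : S.hadamard P ≠ 0) :
    (∀ β : ℝ, 0 ≤ β →
      sSup {r : ℝ | ∃ Δ : Matrix (Fin m) (Fin p) ℝ, r = lam + sumEntries (P.hadamard Δ) ∧
          frobNorm Δ ≤ β ∧ (compl' S).hadamard Δ = 0}
        = lam + β * frobNorm (S.hadamard P)) ∧
    StrictMonoOn (fun β : ℝ =>
      sSup {r : ℝ | ∃ Δ : Matrix (Fin m) (Fin p) ℝ, r = lam + sumEntries (P.hadamard Δ) ∧
          frobNorm Δ ≤ β ∧ (compl' S).hadamard Δ = 0}) (Set.Ici 0) ∧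
    (∀ β : ℝ, 0 ≤ β →
      ((sSup {r : ℝ | ∃ Δ : Matrix (Fin m) (Fin p) ℝ, r = lam + sumEntries (P.hadamard Δ) ∧
          frobNorm Δ ≤ β ∧ (compl' S).hadamard Δ = 0}) = 0
        ↔ β = -lam / frobNorm (S.hadamard P))) := by
  set c := frobNorm (S.hadamard P) with hc_def
  have hc : 0 < c := frobNorm_pos _ hSP
  have key : ∀ β : ℝ, 0 ≤ β →
      sSup {r : ℝ | ∃ Δ : Matrix (Fin m) (Fin p) ℝ, r = lam + sumEntries (P.hadamard Δ) ∧
          frobNorm Δ ≤ β ∧ (compl' S).hadamard Δ = 0} = lam + β * c := by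
    intro β hβ
    -- upper bound
    have hub : ∀ r ∈ {r : ℝ | ∃ Δ : Matrix (Fin m) (Fin p) ℝ,
        r = lam + sumEntries (P.hadamard Δ) ∧ frobNorm Δ ≤ β ∧
        (compl' S).hadamard Δ = 0}, r ≤ lam + β * c := by
      rintro r ⟨Δ, rfl, hn, hsupp⟩
      have hsupp' : ∀ i j, (1 - S i j) * Δ i j = 0 := by
        intro i j
        have := congrFun (congrFun hsupp i) j
        simpa [Matrix.hadamard, compl'] using this
      have hpt : ∀ i j, P i j * Δ i j = (S.hadamard P) i j * Δ i j := by
        intro i j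
        rcases hS i j with h | h
        · have h0 : Δ i j = 0 := by have := hsupp' i j; rw [h] at this; simpa using this
          simp [Matrix.hadamard, h0]
        · simp [Matrix.hadamard, h]
      have hse : sumEntries (P.hadamard Δ) = ∑ i, ∑ j, (S.hadamard P) i j * Δ i j := by
        rw [sumEntries_eq]
        exact Finset.sum_congr rfl fun i _ => Finset.sum_congr rfl fun j _ => by
          simpa [Matrix.hadamard] using hpt i j
      have h1 : sumEntries (P.hadamard Δ) ≤ c * frobNorm Δ := by
        rw [hse]; exact double_cs _ _
      have h2 : c * frobNorm Δ ≤ c * β := by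
        exact mul_le_mul_of_nonneg_left hn hc.le
      nlinarith
    -- the extremal point
    have hmem : lam + β * c ∈ {r : ℝ | ∃ Δ : Matrix (Fin m) (Fin p) ℝ,
        r = lam + sumEntries (P.hadamard Δ) ∧ frobNorm Δ ≤ β ∧
        (compl' S).hadamard Δ = 0} := by
      refine ⟨(β / c) • S.hadamard P, ?_, ?_, ?_⟩
      · congr 1
        rw [sumEntries_eq]
        have hptw : ∀ i j, (P.hadamard ((β / c) • S.hadamard P)) i j
            = (β / c) * ((S.hadamard P) i j) ^ 2 := by
          intro i j
          rcases hS i j with h | h <;> simp [Matrix.hadamard, h] <;> ring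
        have : ∑ i, ∑ j, (P.hadamard ((β / c) • S.hadamard P)) i j
            = (β / c) * ∑ i, ∑ j, ((S.hadamard P) i j) ^ 2 := by
          rw [Finset.mul_sum]
          exact Finset.sum_congr rfl fun i _ => by
            rw [Finset.mul_sum]
            exact Finset.sum_congr rfl fun j _ => hptw i j
        rw [this, ← frobNorm_sq]
        field_simp
        ring
      · rw [frobNorm_smul _ (by positivity)]
        rw [← hc_def]
        rw [div_mul_cancel₀ _ hc.ne']
      · ext i j
        rcases hS i j with h | h <;>
          simp [Matrix.hadamard, compl', h]
    have hne : {r : ℝ | ∃ Δ : Matrix (Fin m) (Fin p) ℝ,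
        r = lam + sumEntries (P.hadamard Δ) ∧ frobNorm Δ ≤ β ∧
        (compl' S).hadamard Δ = 0}.Nonempty := ⟨_, hmem⟩
    exact le_antisymm (csSup_le hne hub) (le_csSup ⟨_, hub⟩ hmem)
  refine ⟨key, ?_, ?_⟩
  · intro a ha b hb hab
    simp only
    rw [key a ha, key b hb]
    have := mul_lt_mul_of_pos_right hab hc
    linarith
  · intro β hβ
    rw [key β hβ]
    constructor
    · intro h
      field_simp
      linarith
    · intro h
      rw [h]
      field_simp
      ring
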